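/- Let u : ℝ → ℝ be three times continuously differentiable and h > 0. For θ ∈ [0,1] let x_d = x_i + θh. Then the quadratic ENO-type interpolant u(x_i)(1−θ) + u(x_i+h)θ − (u(x_i+h) − 2u(x_i) + u(x_i−h)) · θ(1−θ)/2 differs from u(x_d) by O(h³). -/

import Mathlib

open Asymptotics

lemma mvt_step {f f' : ℝ → ℝ} {k : ℕ} (hf : ∀ s, HasDerivAt f (f' s) s) (h0 : f 0 = 0)
    (hO : f' =O[nhds (0:ℝ)] fun s => s ^ k) :
    f =O[nhds (0:ℝ)] fun s => s ^ (k + 1) := by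
  obtain ⟨C, hC0, hC⟩ := hO.exists_nonneg
  have hC' := hC.bound
  rw [Metric.eventually_nhds_iff] at hC'
  obtain ⟨ε, hε, hball⟩ := hC'
  rw [Asymptotics.isBigO_iff]
  refine ⟨C, Metric.eventually_nhds_iff.mpr ⟨ε, hε, fun s hs => ?_⟩⟩
  have hsb : |s| < ε := by simpa [Real.dist_eq] using hs
  have key : ‖f s - f 0‖ ≤ C * |s| ^ k * ‖s - 0‖ := by
    refine Convex.norm_image_sub_le_of_norm_hasDerivWithin_le
      (f := f) (f' := f') (s := Set.uIcc 0 s)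
      (fun t _ => (hf t).hasDerivWithinAt) (fun t ht => ?_) (convex_uIcc 0 s)
      Set.left_mem_uIcc Set.right_mem_uIcc
    have hts : |t| ≤ |s| := by
      rcases Set.mem_uIcc.mp ht with ⟨h1, h2⟩ | ⟨h1, h2⟩ <;>
        exact abs_le.mpr ⟨by linarith [neg_abs_le s, le_abs_self s],
          by linarith [neg_abs_le s, le_abs_self s]⟩
    have h1 : ‖f' t‖ ≤ C * ‖t ^ k‖ := by
      apply hball
      simpa [Real.dist_eq] using lt_of_le_of_lt hts hsb
    calc ‖f' t‖ ≤ C * |t| ^ k := by simpa [abs_pow] using h1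
      _ ≤ C * |s| ^ k := by
          exact mul_le_mul_of_nonneg_left (pow_le_pow_left₀ (abs_nonneg t) hts k) hC0
  have : ‖f s‖ ≤ C * |s| ^ (k + 1) := by
    have := key
    simp only [h0, sub_zero] at this
    calc ‖f s‖ ≤ C * |s| ^ k * |s| := by simpa [Real.norm_eq_abs] using this
      _ = C * |s| ^ (k + 1) := by ring
  simpa [Real.norm_eq_abs, abs_pow] using this

theorem quadratic_ENO_interpolation_third_order (u : ℝ → ℝ)
    (hu : ContDiff ℝ 3 u) (xi θ : ℝ) (hθ : θ ∈ Set.Icc (0:ℝ) 1) :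
    (fun h : ℝ =>
        u xi * (1 - θ) + u (xi + h) * θ
          - (u (xi + h) - 2 * u xi + u (xi - h)) * (θ * (1 - θ) / 2)
          - u (xi + θ * h))
      =O[nhds (0:ℝ)] (fun h : ℝ => h ^ 3) := by
  set u1 := deriv u with hu1def
  set u2 := deriv u1 with hu2def
  have h3 : (3 : WithTop ℕ∞) = 2 + 1 := by norm_num
  have hud : Differentiable ℝ u := hu.differentiable (by norm_num)
  have hu1 : ContDiff ℝ 2 u1 := by
    rw [h3, contDiff_succ_iff_deriv] at hu
    exact hu.2.2
  have hu1d : Differentiable ℝ u1 := hu1.differentiable (by norm_num)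
  have hu2 : ContDiff ℝ 1 u2 := by
    rw [show (2 : WithTop ℕ∞) = 1 + 1 by norm_num, contDiff_succ_iff_deriv] at hu1
    exact hu1.2.2
  have hu2d : Differentiable ℝ u2 := hu2.differentiable (by norm_num)
  set R2 : ℝ → ℝ := fun s => u2 (xi + s) - u2 xi with hR2def
  set R1 : ℝ → ℝ := fun s => u1 (xi + s) - u1 xi - s * u2 xi with hR1def
  set R : ℝ → ℝ := fun s => u (xi + s) - u xi - s * u1 xi - s ^ 2 / 2 * u2 xi with hRdef
  have hadd : ∀ s : ℝ, HasDerivAt (fun t : ℝ => xi + t) 1 s :=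
    fun s => (hasDerivAt_id s).const_add xi
  -- R2 = O(s)
  have hR2O : R2 =O[nhds (0:ℝ)] fun s => s ^ 1 := by
    have h1 : (fun x => u2 x - u2 xi) =O[nhds xi] fun x => x - xi :=
      (hu2d xi).isBigO_sub
    have ht : Filter.Tendsto (fun s : ℝ => xi + s) (nhds 0) (nhds xi) := by
      simpa using (hadd 0).continuousAt.tendsto
    have := h1.comp_tendsto ht
    simpa [Function.comp_def, pow_one, add_sub_cancel_left, hR2def] using this
  -- R1 = O(s^2)
  have hR1deriv : ∀ s, HasDerivAt R1 (R2 s) s := by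
    intro s
    have hA : HasDerivAt (fun t : ℝ => u1 (xi + t)) (u2 (xi + s) * 1) s :=
      (hu1d (xi + s)).hasDerivAt.comp s (hadd s)
    have hB : HasDerivAt (fun t : ℝ => t * u2 xi) (1 * u2 xi) s :=
      (hasDerivAt_id s).mul_const (u2 xi)
    have := (hA.sub_const (u1 xi)).sub hB
    simpa [hR1def, hR2def, Pi.sub_def] using this
  have hR1O : R1 =O[nhds (0:ℝ)] fun s => s ^ 2 :=
    mvt_step hR1deriv (by simp [hR1def]) hR2O
  -- R = O(s^3)
  have hRderiv : ∀ s, HasDerivAt R (R1 s) s := by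
    intro s
    have hA : HasDerivAt (fun t : ℝ => u (xi + t)) (u1 (xi + s) * 1) s :=
      (hud (xi + s)).hasDerivAt.comp s (hadd s)
    have hB : HasDerivAt (fun t : ℝ => t * u1 xi) (1 * u1 xi) s :=
      (hasDerivAt_id s).mul_const (u1 xi)
    have hC : HasDerivAt (fun t : ℝ => t ^ 2 / 2 * u2 xi)
        (((2 : ℕ) * s ^ 1) / 2 * u2 xi) s :=
      ((hasDerivAt_pow 2 s).div_const 2).mul_const (u2 xi)
    have := ((hA.sub_const (u xi)).sub hB).sub hC
    have heq : u1 (xi + s) * 1 - 1 * u1 xi - ((2 : ℕ) * s ^ 1) / 2 * u2 xi = R1 s := by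
      simp [hR1def]
    rw [heq] at this
    exact this
  have hRO : R =O[nhds (0:ℝ)] fun s => s ^ 3 :=
    mvt_step hRderiv (by simp [hRdef]) hR1O
  -- R(-h) = O(h^3)
  have hneg : (fun h : ℝ => R (-h)) =O[nhds (0:ℝ)] fun h : ℝ => h ^ 3 := by
    have ht : Filter.Tendsto (fun h : ℝ => -h) (nhds 0) (nhds (0:ℝ)) := by
      simpa using (continuous_neg.tendsto (0:ℝ))
    have := hRO.comp_tendsto ht
    refine this.trans (Asymptotics.isBigO_of_le _ fun h => ?_)
    simp [Function.comp]
  -- R(θh) = O(h^3)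
  have hth : (fun h : ℝ => R (θ * h)) =O[nhds (0:ℝ)] fun h : ℝ => h ^ 3 := by
    have ht : Filter.Tendsto (fun h : ℝ => θ * h) (nhds 0) (nhds (0:ℝ)) := by
      simpa using ((continuous_mul_left θ).tendsto (0:ℝ))
    have h1 := hRO.comp_tendsto ht
    have h2 : (fun h : ℝ => (θ * h) ^ 3) =O[nhds (0:ℝ)] fun h : ℝ => h ^ 3 := by
      have : (fun h : ℝ => (θ * h) ^ 3) = fun h : ℝ => θ ^ 3 * h ^ 3 := by
        funext h; ring
      rw [this]
      exact Asymptotics.isBigO_const_mul_self _ _ _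
    exact (h1.trans h2)
  have key : (fun h : ℝ => θ * R h - θ * (1 - θ) / 2 * (R h + R (-h)) - R (θ * h))
      =O[nhds (0:ℝ)] fun h : ℝ => h ^ 3 :=
    ((hRO.const_mul_left θ).sub ((hRO.add hneg).const_mul_left (θ * (1 - θ) / 2))).sub hth
  refine key.congr_left fun h => ?_
  simp only [hRdef, sub_eq_add_neg]
  ring
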